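/- Define the metric ρ_h(f, g) = inf{ε > 0 : f ≤ g + ε·h and g ≤ f + ε·h pointwise} on the family K_h of convex functions f : ℝ^d → [0,∞] with f(0)=0 admitting a quadratic majorant f ≤ a·h for some a > 0, where h(x) = ‖x‖²/2. Then (K_h, ρ_h) is a complete metric space. -/

import Mathlib

/-! A `ρ_h`-Cauchy sequence satisfies `|fₘ - fₙ| ≤ δ h` for large `m, n`, so it is pointwise
Cauchy; its pointwise limit `f` inherits the bound `|fₙ - f| ≤ δ h`, which gives both
`ρ_h(fₙ, f) → 0` and a quadratic majorant for `f`. Convexity, `f 0 = 0` and non-negativity are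
closed conditions for pointwise convergence. -/

open Filter
open scoped Topology

noncomputable section

/-- The self-polar function `h(x) = ‖x‖²/2`. -/
def hFun {d : ℕ} (x : EuclideanSpace ℝ (Fin d)) : ℝ := ‖x‖ ^ 2 / 2

/-- The family `K_h` of non-negative convex functions vanishing at the origin which admit a
quadratic majorant `f ≤ a h`. -/
def Kh (d : ℕ) : Set (EuclideanSpace ℝ (Fin d) → ℝ) :=
  {f | ConvexOn ℝ Set.univ f ∧ f 0 = 0 ∧ (∀ x, 0 ≤ f x) ∧ ∃ a : ℝ, ∀ x, f x ≤ a * hFun x}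

/-- The metric `ρ_h(f,g) = inf{ε ≥ 0 : |f − g| ≤ ε h pointwise}`. -/
def rhoH {d : ℕ} (f g : EuclideanSpace ℝ (Fin d) → ℝ) : ℝ :=
  sInf {ε : ℝ | 0 ≤ ε ∧ ∀ x, |f x - g x| ≤ ε * hFun x}

theorem exists_tendsto_of_forall_abs_sub_le_mul {α : Type*} (w : α → ℝ) (u : ℕ → α → ℝ)
    (hu : ∀ δ > 0, ∃ N, ∀ m ≥ N, ∀ n ≥ N, ∀ x, |u m x - u n x| ≤ δ * w x) :
    ∃ v : α → ℝ, Tendsto u atTop (𝓝 v) ∧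
      ∀ δ > 0, ∃ N, ∀ n ≥ N, ∀ x, |u n x - v x| ≤ δ * w x := by
  have hcauchy : ∀ x, CauchySeq (u · x) := fun x => by
    refine Metric.cauchySeq_iff.2 fun ε hε => ?_
    have hw : 0 < |w x| + 1 := by positivity
    obtain ⟨N, hN⟩ := hu (ε / (|w x| + 1)) (by positivity)
    refine ⟨N, fun m hm n hn => ?_⟩
    calc dist (u m x) (u n x) = |u m x - u n x| := Real.dist_eq _ _
      _ ≤ ε / (|w x| + 1) * w x := hN m hm n hn x
      _ ≤ ε / (|w x| + 1) * |w x| := by gcongr; exact le_abs_self _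
      _ < ε / (|w x| + 1) * (|w x| + 1) := by gcongr; linarith
      _ = ε := div_mul_cancel₀ ε hw.ne'
  choose v hv using fun x => cauchySeq_tendsto_of_complete (hcauchy x)
  refine ⟨v, tendsto_pi_nhds.2 hv, fun δ hδ => ?_⟩
  obtain ⟨N, hN⟩ := hu δ hδ
  refine ⟨N, fun n hn x => le_of_tendsto ((tendsto_const_nhds.sub (hv x)).abs) ?_⟩
  exact eventually_atTop.2 ⟨N, fun m hm => hN n hn m hm x⟩

theorem isClosed_setOf_convexOn_map_zero_nonneg {E : Type*} [AddCommMonoid E] [SMul ℝ E] :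
    IsClosed {f : E → ℝ | ConvexOn ℝ Set.univ f ∧ f 0 = 0 ∧ ∀ x, 0 ≤ f x} := by
  simp only [Set.ofPred_and, Set.ofPred_forall]
  exact isClosed_setOfPred_convexOn.inter <|
    (isClosed_eq (continuous_apply 0) continuous_const).inter <|
      isClosed_iInter fun x => isClosed_le continuous_const (continuous_apply x)

section

variable {d : ℕ} {f g k : EuclideanSpace ℝ (Fin d) → ℝ}

lemma hFun_nonneg (x : EuclideanSpace ℝ (Fin d)) : 0 ≤ hFun x := by
  unfold hFun; positivity

lemma rhoH_nonneg : 0 ≤ rhoH f g :=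
  Real.sInf_nonneg fun _ hε => hε.1

lemma rhoH_le {ε : ℝ} (hε : 0 ≤ ε) (h : ∀ x, |f x - g x| ≤ ε * hFun x) : rhoH f g ≤ ε :=
  csInf_le ⟨0, fun _ hε => hε.1⟩ ⟨hε, h⟩

lemma abs_sub_le_rhoH_mul (hb : ∃ ε, 0 ≤ ε ∧ ∀ x, |f x - g x| ≤ ε * hFun x)
    (x : EuclideanSpace ℝ (Fin d)) : |f x - g x| ≤ rhoH f g * hFun x := by
  obtain ⟨ε, hε, hεb⟩ := hb
  rcases (hFun_nonneg x).eq_or_lt with hx | hx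
  · simpa [← hx] using hεb x
  · rw [← div_le_iff₀ hx]
    exact le_csInf ⟨ε, hε, hεb⟩ fun ε' hε' => (div_le_iff₀ hx).2 (hε'.2 x)

lemma rhoH_comm : rhoH f g = rhoH g f := by
  simp only [rhoH, abs_sub_comm (f _)]

lemma rhoH_self : rhoH f f = 0 :=
  le_antisymm (rhoH_le le_rfl fun x => by simp) rhoH_nonneg

lemma Kh.exists_abs_sub_le (hf : f ∈ Kh d) (hg : g ∈ Kh d) :
    ∃ ε, 0 ≤ ε ∧ ∀ x, |f x - g x| ≤ ε * hFun x := by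
  obtain ⟨-, -, hf0, a, ha⟩ := hf
  obtain ⟨-, -, hg0, b, hb⟩ := hg
  refine ⟨max (max a b) 0, le_max_right _ _, fun x => abs_sub_le_iff.2 ⟨?_, ?_⟩⟩
  · calc f x - g x ≤ a * hFun x := by linarith [hg0 x, ha x]
      _ ≤ max (max a b) 0 * hFun x := by gcongr; exact hFun_nonneg x; simp
  · calc g x - f x ≤ b * hFun x := by linarith [hf0 x, hb x]
      _ ≤ max (max a b) 0 * hFun x := by gcongr; exact hFun_nonneg x; simp

lemma Kh.abs_sub_le_rhoH_mul (hf : f ∈ Kh d) (hg : g ∈ Kh d) (x : EuclideanSpace ℝ (Fin d)) :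
    |f x - g x| ≤ rhoH f g * hFun x :=
  _root_.abs_sub_le_rhoH_mul (Kh.exists_abs_sub_le hf hg) x

lemma Kh.eq_of_rhoH_eq_zero (hf : f ∈ Kh d) (hg : g ∈ Kh d) (h : rhoH f g = 0) : f = g := by
  funext x
  have hx := Kh.abs_sub_le_rhoH_mul hf hg x
  rw [h, zero_mul] at hx
  exact sub_eq_zero.1 (abs_nonpos_iff.1 hx)

lemma Kh.rhoH_triangle (hf : f ∈ Kh d) (hg : g ∈ Kh d) (hk : k ∈ Kh d) :
    rhoH f k ≤ rhoH f g + rhoH g k :=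
  rhoH_le (add_nonneg rhoH_nonneg rhoH_nonneg) fun x =>
    calc |f x - k x| ≤ |f x - g x| + |g x - k x| := abs_sub_le _ _ _
      _ ≤ rhoH f g * hFun x + rhoH g k * hFun x :=
        add_le_add (Kh.abs_sub_le_rhoH_mul hf hg x) (Kh.abs_sub_le_rhoH_mul hg hk x)
      _ = (rhoH f g + rhoH g k) * hFun x := (add_mul _ _ _).symm

lemma Kh.mem_of_tendsto {fs : ℕ → EuclideanSpace ℝ (Fin d) → ℝ} (hfs : ∀ n, fs n ∈ Kh d)
    (hlim : Tendsto fs atTop (𝓝 f)) {n : ℕ} {δ : ℝ} (hn : ∀ x, |fs n x - f x| ≤ δ * hFun x) :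
    f ∈ Kh d := by
  obtain ⟨hconv, hzero, hnonneg⟩ := isClosed_setOf_convexOn_map_zero_nonneg.mem_of_tendsto hlim
    (Eventually.of_forall fun m => ⟨(hfs m).1, (hfs m).2.1, (hfs m).2.2.1⟩)
  obtain ⟨a, ha⟩ := (hfs n).2.2.2
  refine ⟨hconv, hzero, hnonneg, a + δ, fun x => ?_⟩
  linarith [ha x, (abs_sub_le_iff.1 (hn x)).2, add_mul a δ (hFun x)]

lemma Kh.exists_tendsto_rhoH {fs : ℕ → EuclideanSpace ℝ (Fin d) → ℝ} (hfs : ∀ n, fs n ∈ Kh d)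
    (hcauchy : ∀ δ : ℝ, 0 < δ → ∃ N, ∀ m ≥ N, ∀ n ≥ N, rhoH (fs m) (fs n) ≤ δ) :
    ∃ f ∈ Kh d, Tendsto (fun n => rhoH (fs n) f) atTop (𝓝 0) := by
  obtain ⟨f, hlim, hunif⟩ := exists_tendsto_of_forall_abs_sub_le_mul hFun fs fun δ hδ => by
    obtain ⟨N, hN⟩ := hcauchy δ hδ
    exact ⟨N, fun m hm n hn x => (Kh.abs_sub_le_rhoH_mul (hfs m) (hfs n) x).trans
      (mul_le_mul_of_nonneg_right (hN m hm n hn) (hFun_nonneg x))⟩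
  obtain ⟨N, hN⟩ := hunif 1 one_pos
  refine ⟨f, Kh.mem_of_tendsto hfs hlim (hN N le_rfl),
    tendsto_order.2 ⟨fun a ha => ?_, fun a ha => ?_⟩⟩
  · exact Eventually.of_forall fun n => ha.trans_le rhoH_nonneg
  · obtain ⟨M, hM⟩ := hunif (a / 2) (half_pos ha)
    exact eventually_atTop.2 ⟨M, fun n hn => (rhoH_le (half_pos ha).le (hM n hn)).trans_lt
      (half_lt_self ha)⟩

end

/-- `(K_h, ρ_h)` is a complete metric space: `ρ_h` separates points, is symmetric, satisfies
the triangle inequality, and every Cauchy sequence converges in `ρ_h` to an element of `K_h`. -/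
theorem Kh_complete_metric {d : ℕ} :
    (∀ f ∈ Kh d, ∀ g ∈ Kh d, (rhoH f g = 0 ↔ f = g)) ∧
    (∀ f g : EuclideanSpace ℝ (Fin d) → ℝ, rhoH f g = rhoH g f) ∧
    (∀ f ∈ Kh d, ∀ g ∈ Kh d, ∀ k ∈ Kh d, rhoH f k ≤ rhoH f g + rhoH g k) ∧
    (∀ fs : ℕ → (EuclideanSpace ℝ (Fin d) → ℝ), (∀ n, fs n ∈ Kh d) →
      (∀ δ : ℝ, 0 < δ → ∃ N, ∀ m ≥ N, ∀ n ≥ N, rhoH (fs m) (fs n) ≤ δ) →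
      ∃ f ∈ Kh d, Tendsto (fun n => rhoH (fs n) f) atTop (𝓝 0)) :=
  ⟨fun _ hf _ hg => ⟨Kh.eq_of_rhoH_eq_zero hf hg, fun h => h ▸ rhoH_self⟩,
    fun _ _ => rhoH_comm,
    fun _ hf _ hg _ hk => Kh.rhoH_triangle hf hg hk,
    fun _ hfs hcauchy => Kh.exists_tendsto_rhoH hfs hcauchy⟩
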